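/- arXiv:2206.01051 — 7 statements merged into one kernel-verified Lean document; each statement's English description precedes it below -/
import Mathlib

section
/- Let H ∈ ℝ^{m×n} with rank(H) = n, let R ∈ ℝ^{m×m} be a symmetric positive definite matrix, and define the estimator θ̂(z) = (HᵀR⁻¹H)⁻¹HᵀR⁻¹z. If a measurement z satisfies z = Hθ for some θ (so the residual ‖z − Hθ̂(z)‖ = 0), then for any attack vector a in the column space of H, the attacked measurement z + a also has zero residual: ‖(z+a) − H·θ̂(z+a)‖ = 0. -/
open Matrix

lemma aux_inj {m n : ℕ} (H : Matrix (Fin m) (Fin n) ℝ) (hH : H.rank = n) :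
    Function.Injective H.mulVecLin := by
  rw [← LinearMap.ker_eq_bot]
  have h1 := LinearMap.finrank_range_add_finrank_ker H.mulVecLin
  rw [show Module.finrank ℝ (LinearMap.range H.mulVecLin) = H.rank from rfl, hH] at h1
  simp only [Module.finrank_fin_fun] at h1
  have h2 : Module.finrank ℝ (LinearMap.ker H.mulVecLin) = 0 := by omega
  exact Submodule.finrank_eq_zero.mp h2

lemma aux_posdef {m n : ℕ} (H : Matrix (Fin m) (Fin n) ℝ) (hH : H.rank = n)
    (R : Matrix (Fin m) (Fin m) ℝ) (hR : R.PosDef) : (Hᵀ * R⁻¹ * H).PosDef := by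
  have hRi := hR.inv
  refine Matrix.PosDef.of_dotProduct_mulVec_pos ?_ ?_
  · show (Hᵀ * R⁻¹ * H)ᴴ = _
    have h1 : (R⁻¹)ᴴ = R⁻¹ := hRi.isHermitian
    simp [Matrix.conjTranspose_mul, Matrix.conjTranspose_eq_transpose_of_trivial,
      Matrix.mul_assoc, (Matrix.conjTranspose_eq_transpose_of_trivial R⁻¹) ▸ h1]
  · intro x hx
    have hHx : H *ᵥ x ≠ 0 := by
      intro h
      apply hx
      have := aux_inj H hH
      have h0 : H.mulVecLin x = H.mulVecLin 0 := by simpa using h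
      exact this h0
    have := hRi.dotProduct_mulVec_pos hHx
    calc (0:ℝ) < star (H *ᵥ x) ⬝ᵥ (R⁻¹ *ᵥ (H *ᵥ x)) := this
      _ = star x ⬝ᵥ ((Hᵀ * R⁻¹ * H) *ᵥ x) := by
        simp only [star_trivial, ← Matrix.mulVec_mulVec]
        rw [Matrix.dotProduct_mulVec x, Matrix.vecMul_transpose]

/-- Undetectability of FDI attacks `a ∈ col(H)` for the WLS estimator
`θ̂(z) = (HᵀR⁻¹H)⁻¹HᵀR⁻¹z`. -/
theorem stmt_0 (m n : ℕ) (H : Matrix (Fin m) (Fin n) ℝ) (hH : H.rank = n)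
    (R : Matrix (Fin m) (Fin m) ℝ) (hR : R.PosDef)
    (est : (Fin m → ℝ) → (Fin n → ℝ))
    (hest : ∀ z, est z = ((Hᵀ * R⁻¹ * H)⁻¹ * Hᵀ * R⁻¹).mulVec z)
    (z : Fin m → ℝ) (θ : Fin n → ℝ) (hz : z = H.mulVec θ)
    (a : Fin m → ℝ) (ha : a ∈ LinearMap.range H.mulVecLin) :
    ‖(z + a) - H.mulVec (est (z + a))‖ = 0 := by
  obtain ⟨c, hc⟩ := ha
  have key : ∀ v : Fin n → ℝ, est (H *ᵥ v) = v := by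
    intro v
    rw [hest]
    rw [Matrix.mulVec_mulVec]
    have hu : IsUnit (Hᵀ * R⁻¹ * H) := (aux_posdef H hH R hR).isUnit
    rw [Matrix.mul_assoc, Matrix.mul_assoc, ← Matrix.mul_assoc Hᵀ,
      Matrix.nonsing_inv_mul _ ((Matrix.isUnit_iff_isUnit_det _).mp hu),
      Matrix.one_mulVec]
  have hza : z + a = H *ᵥ (θ + c) := by
    rw [hz, ← hc]
    simp [Matrix.mulVec_add, Matrix.mulVecLin_apply]
  rw [hza, key, sub_self, norm_zero]
end

section
/- Let G be a connected graph with m edges and n+1 vertices, with loop matrix G₀ ∈ ℝ^{(m−n)×m} (fundamental cycle basis, entries in {0,±1}). Suppose G has no bridges. Let x₀ ∈ ℝ^m have all entries nonzero, and for k = 1,…,m define x_k equal to x₀ except with the k-th coordinate multiplied by (1+δ_k), δ_k ≠ 0. Let F_k = G₀·diag(x_k) and let L_m be the vertical stack of F₀, F₁, …, F_m. Then rank(L_m) = m. -/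
open Matrix

/-- The reduced (oriented) incidence matrix of a graph on vertices `Fin (n+1)`. -/
def incMat (n m : ℕ) (esrc edst : Fin m → Fin (n+1)) : Matrix (Fin n) (Fin m) ℝ :=
  Matrix.of fun i e =>
    if (i.succ : Fin (n+1)) = esrc e then (1 : ℝ)
    else if (i.succ : Fin (n+1)) = edst e then -1 else 0

-- helper: functions constant on connected graph edges are constant
lemma const_of_conn {V : Type*} {G : SimpleGraph V} (hc : G.Connected)
    (f : V → ℝ) (h : ∀ u v, G.Adj u v → f u = f v) (u v : V) : f u = f v := by
  obtain ⟨w⟩ := hc.preconnected u v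
  induction w with
  | nil => rfl
  | cons h' _ ih => exact (h _ _ h').trans ih

-- every column of G₀ is nonzero
lemma col_ne (n m : ℕ) (esrc edst : Fin m → Fin (n+1))
    (hloop : ∀ e, esrc e ≠ edst e)
    (hconn : (SimpleGraph.fromRel fun u v => ∃ e, esrc e = u ∧ edst e = v).Connected)
    (G₀ : Matrix (Fin (m-n)) (Fin m) ℝ)
    (hGcyc : incMat n m esrc edst * G₀ᵀ = 0) (hGrank : G₀.rank = m - n)
    (hbridgeless : ∀ e : Fin m,
      ∃ y : Fin m → ℝ, (incMat n m esrc edst).mulVec y = 0 ∧ y e ≠ 0)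
    (k : Fin m) : ∃ i, G₀ i k ≠ 0 := by
  set A := incMat n m esrc edst with hA
  -- step 1: Aᵀ.mulVec injective (rows of A independent)
  have hinj : ∀ v : Fin n → ℝ, Aᵀ.mulVec v = 0 → v = 0 := by
    intro v hv
    set w : Fin (n+1) → ℝ := fun j => ∑ i, (if (i.succ : Fin (n+1)) = j then v i else 0) with hw
    have hw0 : w 0 = 0 := by
      rw [hw]
      exact Finset.sum_eq_zero fun i _ => by simp [Fin.succ_ne_zero i]
    have hws : ∀ i : Fin n, w i.succ = v i := by
      intro i
      show (∑ j : Fin n, if j.succ = i.succ then v j else 0) = v i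
      rw [Finset.sum_eq_single i (fun j _ hj => by
        simp [(Fin.succ_injective n).ne hj]) (by simp)]
      simp
    have hedge : ∀ e : Fin m, w (esrc e) = w (edst e) := by
      intro e
      have h1 := congrFun hv e
      have : ∑ i, A i e * v i = w (esrc e) - w (edst e) := by
        rw [hw]
        rw [← Finset.sum_sub_distrib]
        apply Finset.sum_congr rfl
        intro i _
        simp only [hA, incMat, Matrix.of_apply]
        by_cases h1 : (i.succ : Fin (n+1)) = esrc e
        · have h2 : (i.succ : Fin (n+1)) ≠ edst e := fun h => hloop e (h1 ▸ h)
          simp [h1, h2, hloop e]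
        · by_cases h2 : (i.succ : Fin (n+1)) = edst e <;>
            simp [h1, h2, (hloop e).symm]
      have h2 : Aᵀ.mulVec v e = ∑ i, A i e * v i := by
        simp [Matrix.mulVec, dotProduct, Matrix.transpose_apply]
      rw [hv] at h2
      have : (0:ℝ) = w (esrc e) - w (edst e) := by
        rw [← this, ← h2]; rfl
      linarith
    have hconst : ∀ u : Fin (n+1), w u = w 0 := by
      intro u
      apply const_of_conn hconn w _ u 0
      intro a b hab
      rcases hab with ⟨hne, ⟨e, h1, h2⟩ | ⟨e, h1, h2⟩⟩
      · rw [← h1, ← h2]; exact hedge e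
      · rw [← h1, ← h2]; exact (hedge e).symm
    funext i
    have := hconst i.succ
    rw [hws, hw0] at this
    simpa using this
  -- rank A = n
  have hrankA : A.rank = n := by
    have : Aᵀ.rank = n := by
      have hinj' : Function.Injective Aᵀ.mulVecLin := by
        rw [injective_iff_map_eq_zero']
        intro v
        constructor
        · exact hinj v
        · intro h; rw [h]; simp
      rw [Matrix.rank, LinearMap.finrank_range_of_inj hinj']
      simp
    rwa [Matrix.rank_transpose] at this
  -- kernel of A.mulVecLin has dim m - n and contains range of G₀ᵀ.mulVecLin
  have hker : Module.finrank ℝ (LinearMap.ker A.mulVecLin) = m - n := by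
    have := LinearMap.finrank_range_add_finrank_ker A.mulVecLin
    rw [← Matrix.rank, hrankA] at this
    simp only [Module.finrank_pi, Fintype.card_fin] at this
    omega
  have hle : LinearMap.range G₀ᵀ.mulVecLin ≤ LinearMap.ker A.mulVecLin := by
    rintro _ ⟨c, rfl⟩
    simp only [LinearMap.mem_ker, Matrix.mulVecLin_apply, Matrix.mulVec_mulVec, hGcyc]
    simp
  have heq : LinearMap.range G₀ᵀ.mulVecLin = LinearMap.ker A.mulVecLin := by
    apply Submodule.eq_of_le_of_finrank_eq hle
    rw [hker]
    show G₀ᵀ.rank = m - n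
    rw [Matrix.rank_transpose, hGrank]
  obtain ⟨y, hy1, hy2⟩ := hbridgeless k
  have hymem : y ∈ LinearMap.range G₀ᵀ.mulVecLin := by
    rw [heq]; exact hy1
  obtain ⟨c, hc⟩ := hymem
  by_contra h
  push_neg at h
  apply hy2
  rw [← hc]
  simp only [Matrix.mulVecLin_apply, Matrix.mulVec, dotProduct, Matrix.transpose_apply]
  exact Finset.sum_eq_zero fun i _ => by rw [h i]; ring


/-- Sufficiency of Theorem 1: for a connected bridgeless graph with loop matrix `G₀`,
perturbing each line `k` in turn (`x_k` equals `x₀` with the `k`-th coordinate scaled by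
`1 + δ_k`) makes the composite circuit-basis matrix `L_m` (vertical stack of
`F_k = G₀·diag(x_k)`, `k = 0,…,m`) have full rank `m`. -/
theorem stmt_7 (n m : ℕ) (esrc edst : Fin m → Fin (n+1))
    (hloop : ∀ e, esrc e ≠ edst e)
    (hconn : (SimpleGraph.fromRel fun u v => ∃ e, esrc e = u ∧ edst e = v).Connected)
    (G₀ : Matrix (Fin (m-n)) (Fin m) ℝ)
    (hpm : ∀ i l, G₀ i l = 0 ∨ G₀ i l = 1 ∨ G₀ i l = -1)
    (hGcyc : incMat n m esrc edst * G₀ᵀ = 0) (hGrank : G₀.rank = m - n)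
    (hbridgeless : ∀ e : Fin m,
      ∃ y : Fin m → ℝ, (incMat n m esrc edst).mulVec y = 0 ∧ y e ≠ 0)
    (x₀ : Fin m → ℝ) (hx₀ : ∀ l, x₀ l ≠ 0)
    (δ : Fin m → ℝ) (hδ : ∀ k, δ k ≠ 0)
    (x : Fin (m+1) → Fin m → ℝ) (hx0 : x 0 = x₀)
    (hxk : ∀ k : Fin m, x k.succ = Function.update x₀ k ((1 + δ k) * x₀ k)) :
    (Matrix.of fun (p : Fin (m+1) × Fin (m-n)) (l : Fin m) =>
      (G₀ * Matrix.diagonal (x p.1)) p.2 l).rank = m := by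
  set L : Matrix (Fin (m+1) × Fin (m-n)) (Fin m) ℝ :=
    Matrix.of fun p l => (G₀ * Matrix.diagonal (x p.1)) p.2 l with hL
  have hLentry : ∀ p l, L p l = G₀ p.2 l * x p.1 l := by
    intro p l
    simp [hL, Matrix.mul_apply, Matrix.diagonal, Finset.sum_ite_eq]
  -- columns are linearly independent: mulVec injective
  have hinj : ∀ v : Fin m → ℝ, L.mulVec v = 0 → v = 0 := by
    intro v hv
    funext k
    obtain ⟨i, hi⟩ := col_ne n m esrc edst hloop hconn G₀ hGcyc hGrank hbridgeless k
    have h0 := congrFun hv (0, i)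
    have hk := congrFun hv (k.succ, i)
    simp only [Matrix.mulVec, dotProduct, Pi.zero_apply] at h0 hk
    have hdiff : ∑ l, (L (k.succ, i) l - L (0, i) l) * v l = 0 := by
      have heq : ∑ l, (L (k.succ, i) l - L (0, i) l) * v l
          = (∑ l, L (k.succ, i) l * v l) - ∑ l, L (0, i) l * v l := by
        rw [← Finset.sum_sub_distrib]
        exact Finset.sum_congr rfl fun l _ => by ring
      rw [heq, hk, h0, sub_zero]
    have hval : ∀ l, L (k.succ, i) l - L (0, i) l =
        if l = k then G₀ i k * (δ k * x₀ k) else 0 := by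
      intro l
      rw [hLentry, hLentry]
      simp only [hx0, hxk k]
      by_cases h : l = k
      · subst h
        rw [Function.update_self, if_pos rfl]
        ring
      · rw [Function.update_of_ne h]
        simp [h]
    simp only [hval, ite_mul, zero_mul] at hdiff
    rw [Finset.sum_ite_eq' Finset.univ k fun l => G₀ i k * (δ k * x₀ k) * v l] at hdiff
    simp only [Finset.mem_univ, if_true] at hdiff
    show v k = 0
    have hne := mul_ne_zero hi (mul_ne_zero (hδ k) (hx₀ k))
    exact (mul_eq_zero.mp hdiff).resolve_left hne
  have hinj' : Function.Injective L.mulVecLin := by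
    rw [injective_iff_map_eq_zero']
    intro v
    exact ⟨hinj v, fun h => by rw [h]; simp⟩
  rw [Matrix.rank, LinearMap.finrank_range_of_inj hinj']
  simp
end

section
/- Let G be a connected graph with m edges whose set of bridges has cardinality m_sc > 0. For any finite family of reactance assignments x₀, …, x_k (all entries nonzero) with associated circuit basis matrices F_i = G₀·diag(x_i) and composite matrix L_k (the vertical stack of the F_i), we have rank(L_k) ≤ m − m_sc, so the kernel of L_k has dimension at least m_sc; in particular any vector supported on the bridges lies in ker(L_k). -/
open Matrix

/-- If a connected graph has `msc > 0` bridges, then for any finite family of reactance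
assignments the composite circuit-basis matrix `L_k` has rank at most `m - msc`, its
kernel has dimension at least `msc`, and every vector supported on the bridges lies in
`ker L_k`. -/
theorem stmt_8 (n m k msc : ℕ) (esrc edst : Fin m → Fin (n+1))
    (hloop : ∀ e, esrc e ≠ edst e)
    (hconn : (SimpleGraph.fromRel fun u v => ∃ e, esrc e = u ∧ edst e = v).Connected)
    (G₀ : Matrix (Fin (m-n)) (Fin m) ℝ)
    (hGcyc : incMat n m esrc edst * G₀ᵀ = 0) (hGrank : G₀.rank = m - n)
    (Ksc : Finset (Fin m))
    (hKsc : ∀ e, e ∈ Ksc ↔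
      ∀ y : Fin m → ℝ, (incMat n m esrc edst).mulVec y = 0 → y e = 0)
    (hmsc : Ksc.card = msc) (hpos : 0 < msc)
    (x : Fin (k+1) → Fin m → ℝ) (hx : ∀ i l, x i l ≠ 0)
    (L : Matrix (Fin (k+1) × Fin (m-n)) (Fin m) ℝ)
    (hLdef : L = Matrix.of fun (p : Fin (k+1) × Fin (m-n)) (l : Fin m) =>
      (G₀ * Matrix.diagonal (x p.1)) p.2 l) :
    L.rank ≤ m - msc ∧
    msc ≤ Module.finrank ℝ (LinearMap.ker L.mulVecLin) ∧
    ∀ a : Fin m → ℝ, (∀ l, a l ≠ 0 → l ∈ Ksc) → L.mulVec a = 0 := by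
  -- Every row of G₀ is in the kernel of the incidence matrix
  have hrow : ∀ i : Fin (m-n), (incMat n m esrc edst).mulVec (fun l => G₀ i l) = 0 := by
    intro i
    funext j
    have := congrFun (congrFun hGcyc j) i
    simpa [Matrix.mul_apply, Matrix.mulVec, dotProduct, Matrix.transpose_apply] using this
  -- Bridge columns of G₀ vanish
  have hG0col : ∀ e ∈ Ksc, ∀ i, G₀ i e = 0 := by
    intro e he i
    exact (hKsc e).1 he _ (hrow i)
  -- hence bridge columns of L vanish
  have hLcol : ∀ e ∈ Ksc, ∀ p, L p e = 0 := by
    intro e he p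
    simp [hLdef, Matrix.mul_apply, Matrix.diagonal, Matrix.of_apply,
      Finset.sum_ite_eq, hG0col e he]
  have hm : msc ≤ m := by
    have := Finset.card_le_univ Ksc
    simpa [hmsc] using this
  -- rank bound
  have hrank : L.rank ≤ m - msc := by
    classical
    set T : Finset (Fin (k+1) × Fin (m-n) → ℝ) := Kscᶜ.image (fun e => Lᵀ e) with hT
    have hsub : Submodule.span ℝ (Set.range Lᵀ) ≤ Submodule.span ℝ (T : Set (Fin (k+1) × Fin (m-n) → ℝ)) := by
      rw [Submodule.span_le]
      rintro v ⟨e, rfl⟩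
      by_cases he : e ∈ Ksc
      · have : Lᵀ e = 0 := by
          funext p; exact hLcol e he p
        rw [this]; exact Submodule.zero_mem _
      · exact Submodule.subset_span (Finset.mem_coe.2 (Finset.mem_image_of_mem _
          (Finset.mem_compl.2 he)))
    have h1 : L.rank ≤ Module.finrank ℝ (Submodule.span ℝ (T : Set (Fin (k+1) × Fin (m-n) → ℝ))) := by
      rw [Matrix.rank, Matrix.range_mulVecLin]
      exact Submodule.finrank_mono hsub
    have h2 : Module.finrank ℝ (Submodule.span ℝ (T : Set (Fin (k+1) × Fin (m-n) → ℝ))) ≤ T.card :=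
      finrank_span_finset_le_card T
    have h3 : T.card ≤ Kscᶜ.card := Finset.card_image_le
    have h4 : Kscᶜ.card = m - msc := by
      rw [Finset.card_compl, hmsc]; simp
    omega
  refine ⟨hrank, ?_, ?_⟩
  · have hrn := LinearMap.finrank_range_add_finrank_ker L.mulVecLin
    have hdom : Module.finrank ℝ (Fin m → ℝ) = m := by simp
    have : L.rank + Module.finrank ℝ (LinearMap.ker L.mulVecLin) = m := by
      rw [Matrix.rank]; omega
    omega
  · intro a ha
    funext p
    rw [Matrix.mulVec, dotProduct]
    apply Finset.sum_eq_zero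
    intro l _
    by_cases hl : a l = 0
    · simp [hl]
    · simp [hLcol l (ha l hl) p]
end

section
/- A connected power network is a complete system — i.e., there exists a finite sequence of reactance perturbations whose composite circuit-basis matrix L satisfies rank(L) = m (equivalently, the intersection of the column spaces of all stage measurement matrices is {0}) — if and only if the network graph has no bridge. -/
open Matrix

/-- Theorem 1: a connected power network is a complete system — there is a finite
sequence of reactance assignments (all entries nonzero) whose composite circuit-basis
matrix has full rank `m` — iff the network graph has no bridge (every edge lies on a
cycle). -/
theorem stmt_9 (n m : ℕ) (esrc edst : Fin m → Fin (n+1))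
    (hloop : ∀ e, esrc e ≠ edst e)
    (hconn : (SimpleGraph.fromRel fun u v => ∃ e, esrc e = u ∧ edst e = v).Connected)
    (G₀ : Matrix (Fin (m-n)) (Fin m) ℝ)
    (hGcyc : incMat n m esrc edst * G₀ᵀ = 0) (hGrank : G₀.rank = m - n) :
    (∃ (k : ℕ) (x : Fin (k+1) → Fin m → ℝ), (∀ i l, x i l ≠ 0) ∧
      (Matrix.of fun (p : Fin (k+1) × Fin (m-n)) (l : Fin m) =>
        (G₀ * Matrix.diagonal (x p.1)) p.2 l).rank = m) ↔
    (∀ e : Fin m, ∃ y : Fin m → ℝ,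
      (incMat n m esrc edst).mulVec y = 0 ∧ y e ≠ 0) := by
  classical
  set A := incMat n m esrc edst with hAdef
  -- summation helper
  have hind : ∀ (z : Fin n → ℝ) (c : Fin (n+1)),
      (∑ i, if (i.succ : Fin (n+1)) = c then z i else 0) = Fin.cases (0:ℝ) z c := by
    intro z c
    induction c using Fin.cases with
    | zero => simp [Fin.succ_ne_zero]
    | succ j => simp [Fin.succ_inj]
  have hAsum : ∀ (z : Fin n → ℝ) (e : Fin m),
      ∑ i, z i * A i e = Fin.cases (0:ℝ) z (esrc e) - Fin.cases (0:ℝ) z (edst e) := by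
    intro z e
    rw [← hind z (esrc e), ← hind z (edst e), ← Finset.sum_sub_distrib]
    refine Finset.sum_congr rfl fun i _ => ?_
    simp only [hAdef, incMat, Matrix.of_apply]
    by_cases hs : (i.succ : Fin (n+1)) = esrc e
    · have hd : ¬ (i.succ : Fin (n+1)) = edst e := fun h => hloop e (hs.symm.trans h)
      simp [hs, hd, hloop e]
    · by_cases hd : (i.succ : Fin (n+1)) = edst e
      · simp [hs, hd, (hloop e).symm]
      · simp [hs, hd]
  -- injectivity of the left multiplication by A (rows of A are independent)
  have hinj : Function.Injective (Aᵀ.mulVecLin) := by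
    rw [← LinearMap.ker_eq_bot]
    rw [Submodule.eq_bot_iff]
    intro z hz
    rw [LinearMap.mem_ker] at hz
    set w : Fin (n+1) → ℝ := Fin.cases 0 z with hw
    have hedge : ∀ e, w (esrc e) = w (edst e) := by
      intro e
      have h0 : (Aᵀ.mulVecLin z) e = 0 := by rw [hz]; rfl
      have h1 : ∑ i, z i * A i e = 0 := by
        simpa [Matrix.mulVecLin_apply, Matrix.mulVec, Matrix.vecMul, dotProduct,
          Matrix.transpose_apply, mul_comm] using h0
      have h2 := hAsum z e
      rw [h1] at h2
      have := sub_eq_zero.mp h2.symm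
      simpa [hw] using this
    have hwalk : ∀ (a b : Fin (n+1))
        (p : (SimpleGraph.fromRel fun u v => ∃ e, esrc e = u ∧ edst e = v).Walk a b),
        w a = w b := by
      intro a b p
      induction p with
      | nil => rfl
      | cons h q ih =>
        rw [SimpleGraph.fromRel_adj] at h
        rcases h.2 with ⟨e, he1, he2⟩ | ⟨e, he1, he2⟩
        · rw [← he1, hedge e, he2]; exact ih
        · rw [← he2, ← hedge e, he1]; exact ih
    have hall : ∀ v, w v = 0 := by
      intro v
      obtain ⟨p⟩ := hconn.preconnected v 0
      exact hwalk v 0 p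
    funext i
    have := hall i.succ
    simpa [hw] using this
  have hrankA : A.rank = n := by
    rw [← Matrix.rank_transpose A, Matrix.rank,
      LinearMap.finrank_range_of_inj hinj, Module.finrank_fin_fun]
  have hnm : n ≤ m := by
    have := A.rank_le_card_width
    rw [hrankA, Fintype.card_fin] at this
    exact this
  -- row space of G₀ equals kernel of A
  have hRleK : LinearMap.range (G₀ᵀ).mulVecLin ≤ LinearMap.ker A.mulVecLin := by
    rintro y ⟨u, rfl⟩
    rw [LinearMap.mem_ker]
    simp only [Matrix.mulVecLin_apply]
    rw [Matrix.mulVec_mulVec, hGcyc, Matrix.zero_mulVec]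
  have hkerA : Module.finrank ℝ (LinearMap.ker A.mulVecLin) = m - n := by
    have h1 := LinearMap.finrank_range_add_finrank_ker A.mulVecLin
    rw [← Matrix.rank, hrankA, Module.finrank_fin_fun] at h1
    omega
  have hKR : LinearMap.ker A.mulVecLin = LinearMap.range (G₀ᵀ).mulVecLin := by
    symm
    refine Submodule.eq_of_le_of_finrank_le hRleK ?_
    rw [hkerA, ← Matrix.rank, Matrix.rank_transpose, hGrank]
  constructor
  · rintro ⟨k, x, hx, hrank⟩ e
    have hcole : ∃ p, G₀ p e ≠ 0 := by
      by_contra hc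
      push_neg at hc
      set L : Matrix (Fin (k+1) × Fin (m-n)) (Fin m) ℝ :=
        Matrix.of fun (p : Fin (k+1) × Fin (m-n)) (l : Fin m) =>
          (G₀ * Matrix.diagonal (x p.1)) p.2 l with hL
      have hker : L.mulVecLin (Pi.single e (1:ℝ)) = 0 := by
        ext p
        simp [hL, Matrix.mulVecLin_apply, Matrix.mulVec_single, Matrix.mul_diagonal, hc p.2]
      have hne : (Pi.single e 1 : Fin m → ℝ) ≠ 0 := by
        intro h0
        have := congrFun h0 e
        simp at this
      have hkne : Module.finrank ℝ (LinearMap.ker L.mulVecLin) ≠ 0 := by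
        intro h0
        have hbot : LinearMap.ker L.mulVecLin = ⊥ := Submodule.finrank_eq_zero.mp h0
        have : Pi.single e (1:ℝ) ∈ LinearMap.ker L.mulVecLin := hker
        rw [hbot, Submodule.mem_bot] at this
        exact hne this
      have h1 := LinearMap.finrank_range_add_finrank_ker L.mulVecLin
      rw [← Matrix.rank, hrank, Module.finrank_fin_fun] at h1
      omega
    obtain ⟨p, hp⟩ := hcole
    refine ⟨G₀ᵀ.mulVec (Pi.single p 1), ?_, ?_⟩
    · rw [Matrix.mulVec_mulVec, hGcyc, Matrix.zero_mulVec]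
    · simp [Matrix.mulVec_single, Matrix.transpose_apply, hp]
  · intro hR
    have hcols : ∀ e : Fin m, ∃ p, G₀ p e ≠ 0 := by
      intro e
      obtain ⟨y, hy1, hy2⟩ := hR e
      have hyK : y ∈ LinearMap.ker A.mulVecLin := by
        rw [LinearMap.mem_ker]; exact hy1
      rw [hKR] at hyK
      obtain ⟨u, rfl⟩ := hyK
      by_contra hc
      push_neg at hc
      apply hy2
      simp only [Matrix.mulVecLin_apply, Matrix.mulVec, dotProduct,
        Matrix.transpose_apply]
      exact Finset.sum_eq_zero fun p _ => by simp only [hc p, zero_mul]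
    refine ⟨m, fun i l => if i = (l.succ : Fin (m+1)) then 2 else 1, ?_, ?_⟩
    · intro i l; dsimp only; split_ifs <;> norm_num
    · set x : Fin (m+1) → Fin m → ℝ := fun i l => if i = (l.succ : Fin (m+1)) then 2 else 1
        with hxdef
      set L : Matrix (Fin (m+1) × Fin (m-n)) (Fin m) ℝ :=
        Matrix.of fun (p : Fin (m+1) × Fin (m-n)) (l : Fin m) =>
          (G₀ * Matrix.diagonal (x p.1)) p.2 l with hL
      show L.rank = m
      rw [← Matrix.rank_transpose, Matrix.rank]
      have hrow : ∀ r : Fin (m+1) × Fin (m-n),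
          Lᵀ.mulVecLin (Pi.single r 1) = fun l => L r l := by
        intro r
        ext l
        simp [Matrix.mulVecLin_apply, Matrix.mulVec_transpose, Matrix.single_vecMul]
      have htop : LinearMap.range (Lᵀ.mulVecLin) = ⊤ := by
        rw [eq_top_iff, ← (Pi.basisFun ℝ (Fin m)).span_eq, Submodule.span_le]
        rintro v ⟨j, rfl⟩
        rw [Pi.basisFun_apply]
        obtain ⟨p, hp⟩ := hcols j
        refine ⟨(G₀ p j)⁻¹ • (Pi.single ((j.succ : Fin (m+1)), p) (1:ℝ)
          - Pi.single ((0 : Fin (m+1)), p) (1:ℝ)), ?_⟩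
        rw [LinearMap.map_smul, LinearMap.map_sub, hrow, hrow]
        funext l
        simp only [Pi.smul_apply, Pi.sub_apply, smul_eq_mul, hL, Matrix.of_apply,
          Matrix.mul_diagonal, hxdef]
        by_cases hlj : l = j
        · subst hlj
          have h1 : ((l.succ : Fin (m+1)) = (l.succ : Fin (m+1))) := rfl
          have h2 : ¬ ((0 : Fin (m+1)) = (l.succ : Fin (m+1))) := (Fin.succ_ne_zero l).symm
          simp only [if_pos h1, if_neg h2, Pi.single_eq_same, mul_one]
          field_simp
          ring
          norm_num
        · have h1 : ¬ ((j.succ : Fin (m+1)) = (l.succ : Fin (m+1))) := by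
            intro h; exact hlj (Fin.succ_inj.mp h).symm
          have h2 : ¬ ((0 : Fin (m+1)) = (l.succ : Fin (m+1))) := (Fin.succ_ne_zero l).symm
          simp only [if_neg h1, if_neg h2, mul_one]
          rw [sub_self, mul_zero]
          exact ((Pi.single_eq_of_ne hlj 1 : (Pi.single j 1 : Fin m → ℝ) l = 0)).symm
      rw [htop, finrank_top, Module.finrank_fin_fun]
end

section
/- Let G be a connected bridgeless graph with m edges and spanning tree T (with n edges). Write the loop matrix with respect to T as G₀ = [G_T̄ G_T] where G_T̄ ∈ ℝ^{(m−n)×(m−n)} is the identity-like part on cotree edges. Suppose only the edges of T carry perturbation devices: for k = 1,…,n let x_k differ from x₀ only in the coordinate of the k-th tree edge, scaled by (1+δ_k) with δ_k ≠ 0. Then the composite matrix L_n (stack of F₀,…,F_n with F_k = G₀·diag(x_k)) has rank m. -/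
open Matrix

/-- The reduced (oriented) incidence matrix of a graph on vertices `Fin (n+1)`, with
edges indexed by cotree edges `Sum.inl` and (candidate) tree edges `Sum.inr`. -/
def incMat2 (n m : ℕ) (esrc edst : Fin (m-n) ⊕ Fin n → Fin (n+1)) :
    Matrix (Fin n) (Fin (m-n) ⊕ Fin n) ℝ :=
  Matrix.of fun i e =>
    if (i.succ : Fin (n+1)) = esrc e then (1 : ℝ)
    else if (i.succ : Fin (n+1)) = edst e then -1 else 0

/-- Sufficiency of Theorem 2: in a connected bridgeless graph whose loop matrix w.r.t. a
spanning tree `T` (the `Sum.inr` edges) has a nonsingular diagonal cotree block,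
perturbing only the tree edges one at a time yields a composite matrix `L_n` of full
rank `m`. -/
theorem stmt_10 (n m : ℕ) (hnm : n ≤ m)
    (esrc edst : Fin (m-n) ⊕ Fin n → Fin (n+1))
    (hloop : ∀ e, esrc e ≠ edst e)
    (hconn : (SimpleGraph.fromRel fun u v => ∃ e, esrc e = u ∧ edst e = v).Connected)
    (htree : IsUnit ((incMat2 n m esrc edst).submatrix id Sum.inr).det)
    (G₀ : Matrix (Fin (m-n)) (Fin (m-n) ⊕ Fin n) ℝ)
    (hGcyc : incMat2 n m esrc edst * G₀ᵀ = 0)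
    (hdiag0 : ∀ i j, i ≠ j → G₀ i (Sum.inl j) = 0)
    (hdiagnz : ∀ i, G₀ i (Sum.inl i) ≠ 0)
    (hbridgeless : ∀ e, ∃ y : Fin (m-n) ⊕ Fin n → ℝ,
      (incMat2 n m esrc edst).mulVec y = 0 ∧ y e ≠ 0)
    (x₀ : Fin (m-n) ⊕ Fin n → ℝ) (hx₀ : ∀ l, x₀ l ≠ 0)
    (δ : Fin n → ℝ) (hδ : ∀ k, δ k ≠ 0)
    (x : Fin (n+1) → Fin (m-n) ⊕ Fin n → ℝ) (hx0 : x 0 = x₀)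
    (hxk : ∀ k : Fin n, x k.succ =
      Function.update x₀ (Sum.inr k) ((1 + δ k) * x₀ (Sum.inr k))) :
    (Matrix.of fun (p : Fin (n+1) × Fin (m-n)) (l : Fin (m-n) ⊕ Fin n) =>
      (G₀ * Matrix.diagonal (x p.1)) p.2 l).rank = m := by
  classical
  set A := incMat2 n m esrc edst with hA
  set At := A.submatrix id Sum.inr with hAt
  set Ac := A.submatrix id Sum.inl with hAc
  set B := At⁻¹ * Ac with hB
  -- kernel vectors of A have tree part determined by cotree part
  have hker : ∀ y : Fin (m-n) ⊕ Fin n → ℝ, A.mulVec y = 0 →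
      (fun k => y (Sum.inr k)) = -(B.mulVec (fun j => y (Sum.inl j))) := by
    intro y hy
    have hsplit : At.mulVec (fun j => y (Sum.inr j))
        = -(Ac.mulVec (fun j => y (Sum.inl j))) := by
      funext j
      have h0 := congrFun hy j
      simp only [mulVec, dotProduct, Fintype.sum_sum_type, Pi.zero_apply] at h0
      simp only [mulVec, dotProduct, Pi.neg_apply, hAt, hAc, submatrix_apply, id_eq]
      linarith
    have h1 := congrArg (fun w => At⁻¹.mulVec w) hsplit
    simp only [mulVec_mulVec, mulVec_neg] at h1
    rw [Matrix.nonsing_inv_mul At htree, one_mulVec] at h1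
    rw [hB]
    exact h1
  -- the rows of G₀ are in the kernel of A
  have hrow : ∀ i, A.mulVec (fun l => G₀ i l) = 0 := by
    intro i
    funext j
    have h := Matrix.ext_iff.2 hGcyc j i
    simpa [Matrix.mul_apply, mulVec, dotProduct, Matrix.transpose_apply] using h
  -- explicit form of tree entries of G₀
  have hGrow : ∀ i k, G₀ i (Sum.inr k) = -(B k i * G₀ i (Sum.inl i)) := by
    intro i k
    have h := congrFun (hker (fun l => G₀ i l) (hrow i)) k
    simp only [Pi.neg_apply, mulVec, dotProduct] at h
    rw [h, neg_inj]
    rw [Finset.sum_eq_single i]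
    · intro b _ hb
      rw [hdiag0 i b (Ne.symm hb), mul_zero]
    · intro hmem; exact absurd (Finset.mem_univ i) hmem
  -- every tree-edge column of G₀ has a nonzero entry
  have colnz : ∀ k, ∃ i, G₀ i (Sum.inr k) ≠ 0 := by
    intro k
    by_contra hcon
    push_neg at hcon
    have hBk : ∀ i, B k i = 0 := by
      intro i
      have h := hGrow i k
      rw [hcon i, eq_comm, neg_eq_zero, mul_eq_zero] at h
      exact h.resolve_right (hdiagnz i)
    obtain ⟨y, hy, hyk⟩ := hbridgeless (Sum.inr k)
    have h := congrFun (hker y hy) k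
    simp only [Pi.neg_apply, mulVec, dotProduct] at h
    apply hyk
    rw [h, neg_eq_zero]
    exact Finset.sum_eq_zero fun i _ => by rw [hBk i, zero_mul]
  -- the composite matrix
  set L : Matrix (Fin (n+1) × Fin (m-n)) (Fin (m-n) ⊕ Fin n) ℝ :=
    Matrix.of fun (p : Fin (n+1) × Fin (m-n)) (l : Fin (m-n) ⊕ Fin n) =>
      (G₀ * Matrix.diagonal (x p.1)) p.2 l with hL
  -- injectivity of mulVec
  have hinj : Function.Injective L.mulVecLin := by
    rw [← LinearMap.ker_eq_bot, LinearMap.ker_eq_bot']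
    intro v hv0
    have hv : ∀ (q : Fin (n+1)) (i : Fin (m-n)),
        ∑ l, G₀ i l * x q l * v l = 0 := by
      intro q i
      have h := congrFun hv0 (q, i)
      simpa [hL, mulVecLin_apply, mulVec, dotProduct, of_apply,
        Matrix.mul_diagonal] using h
    -- tree coordinates vanish
    have vt : ∀ k, v (Sum.inr k) = 0 := by
      intro k
      obtain ⟨i, hi⟩ := colnz k
      have h0 := hv 0 i
      rw [hx0] at h0
      have h1 := hv k.succ i
      have hdiff : G₀ i (Sum.inr k) * (δ k * x₀ (Sum.inr k)) * v (Sum.inr k) = 0 := by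
        have hsub : ∑ l, (G₀ i l * x k.succ l * v l - G₀ i l * x₀ l * v l)
            = G₀ i (Sum.inr k) * (δ k * x₀ (Sum.inr k)) * v (Sum.inr k) := by
          rw [Finset.sum_eq_single (Sum.inr k)]
          · rw [hxk k, Function.update_self]; ring
          · intro b _ hb
            rw [hxk k, Function.update_of_ne hb]; ring
          · intro hmem; exact absurd (Finset.mem_univ _) hmem
        rw [← hsub, Finset.sum_sub_distrib, h0, h1, sub_zero]
      have hne : G₀ i (Sum.inr k) * (δ k * x₀ (Sum.inr k)) ≠ 0 :=
        mul_ne_zero hi (mul_ne_zero (hδ k) (hx₀ _))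
      exact (mul_eq_zero.mp hdiff).resolve_left hne
    -- cotree coordinates vanish
    have vl : ∀ i, v (Sum.inl i) = 0 := by
      intro i
      have h0 := hv 0 i
      rw [hx0] at h0
      rw [Fintype.sum_sum_type] at h0
      have h2 : ∑ k, G₀ i (Sum.inr k) * x₀ (Sum.inr k) * v (Sum.inr k) = 0 :=
        Finset.sum_eq_zero fun k _ => by rw [vt k, mul_zero]
      rw [h2, add_zero] at h0
      rw [Finset.sum_eq_single i] at h0
      · rw [mul_assoc] at h0
        have h3 := (mul_eq_zero.mp h0).resolve_left (hdiagnz i)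
        exact (mul_eq_zero.mp h3).resolve_left (hx₀ _)
      · intro b _ hb
        rw [hdiag0 i b (Ne.symm hb), zero_mul, zero_mul]
      · intro hmem; exact absurd (Finset.mem_univ _) hmem
    funext l
    cases l with
    | inl i => exact vl i
    | inr k => exact vt k
  -- conclude rank = m
  rw [Matrix.rank, LinearMap.finrank_range_of_inj hinj,
    Module.finrank_fintype_fun_eq_card, Fintype.card_sum, Fintype.card_fin,
    Fintype.card_fin]
  omega
end

section
/- Let G be a connected graph with m edges and n+1 vertices, with m_sc bridges. Over all finite sequences of reactance perturbations restricted to the edge set K_D = T \ K_sc (a spanning tree T minus the set K_sc of bridges), the maximum achievable rank of the composite circuit-basis matrix L equals m − m_sc, and this equals the maximum achievable over perturbations of all m edges. -/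
open Matrix

/-- The set of ranks of composite circuit-basis matrices achievable by finite sequences
of reactance perturbations supported on a deployment set `D` (all reactances nonzero,
initial assignment `x₀`). -/
def achievableRanks (m n : ℕ) (G₀ : Matrix (Fin (m-n)) (Fin m) ℝ)
    (x₀ : Fin m → ℝ) (D : Finset (Fin m)) : Set ℕ :=
  {r | ∃ (k : ℕ) (x : Fin (k+1) → Fin m → ℝ), x 0 = x₀ ∧ (∀ i l, x i l ≠ 0) ∧
    (∀ i l, l ∉ D → x i l = x₀ l) ∧
    (Matrix.of fun (p : Fin (k+1) × Fin (m-n)) (l : Fin m) =>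
      (G₀ * Matrix.diagonal (x p.1)) p.2 l).rank = r}

open Submodule Module Set

section Helpers

variable {m : ℕ}

/-- The submodule of vectors vanishing outside a finset `s`. -/
def vanishOff (s : Finset (Fin m)) : Submodule ℝ (Fin m → ℝ) where
  carrier := {v | ∀ l ∉ s, v l = 0}
  add_mem' := fun {a b} ha hb l hl => by simp [ha l hl, hb l hl]
  zero_mem' := fun l _ => rfl
  smul_mem' := fun c a ha l hl => by simp [ha l hl]

lemma mem_vanishOff {s : Finset (Fin m)} {v : Fin m → ℝ} :
    v ∈ vanishOff s ↔ ∀ l ∉ s, v l = 0 := Iff.rfl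

lemma vanishOff_eq_span (s : Finset (Fin m)) :
    vanishOff s = span ℝ (Set.range fun l : {l // l ∈ s} => (Pi.single l.1 1 : Fin m → ℝ)) := by
  apply le_antisymm
  · intro v hv
    have hv' : v = ∑ l ∈ s, v l • (Pi.single l 1 : Fin m → ℝ) := by
      funext j
      rw [Finset.sum_apply]
      by_cases hj : j ∈ s
      · rw [Finset.sum_eq_single j]
        · simp
        · intro l _ hne
          simp [Pi.single_apply, (Ne.symm hne)]
        · exact fun h => absurd hj h
      · rw [hv j hj]
        refine (Finset.sum_eq_zero ?_).symm
        intro l hl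
        have : j ≠ l := fun h => hj (by rw [h]; exact hl)
        simp [Pi.single_apply, this]
    rw [hv']
    exact sum_mem fun l hl => smul_mem _ _ (subset_span ⟨⟨l, hl⟩, rfl⟩)
  · rw [span_le]
    rintro _ ⟨l, rfl⟩ j hj
    refine Pi.single_eq_of_ne (fun h => hj ?_) 1
    rw [h]; exact l.2

lemma finrank_vanishOff (s : Finset (Fin m)) : finrank ℝ (vanishOff s) = s.card := by
  rw [vanishOff_eq_span]
  have hind : LinearIndependent ℝ (fun l : {l // l ∈ s} => (Pi.single l.1 1 : Fin m → ℝ)) := by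
    have h2 := (Pi.basisFun ℝ (Fin m)).linearIndependent.comp
      (Subtype.val : {l // l ∈ s} → Fin m) Subtype.val_injective
    have he : (fun l : {l // l ∈ s} => (Pi.single l.1 1 : Fin m → ℝ)) =
        (⇑(Pi.basisFun ℝ (Fin m)) ∘ Subtype.val) := by
      funext l
      simp [Function.comp]
    rw [he]
    exact h2
  rw [finrank_span_eq_card hind, Fintype.card_coe]

lemma mulVec_eq_sum_cols {k : ℕ} (A : Matrix (Fin k) (Fin m) ℝ) (v : Fin m → ℝ) :
    A.mulVec v = ∑ l, v l • Aᵀ l := by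
  funext i
  simp [Matrix.mulVec, dotProduct, Finset.sum_apply, mul_comm]

end Helpers

/-- Corollary on the topology-determined supremum: with devices only on the non-bridge
edges `T \ K_sc` of a spanning tree `T`, the maximum achievable rank of the composite
circuit-basis matrix is `m - m_sc`, and it coincides with the maximum achievable when
all `m` edges carry devices. -/
theorem stmt_12 (n m msc : ℕ) (esrc edst : Fin m → Fin (n+1))
    (hloop : ∀ e, esrc e ≠ edst e)
    (hconn : (SimpleGraph.fromRel fun u v => ∃ e, esrc e = u ∧ edst e = v).Connected)
    (G₀ : Matrix (Fin (m-n)) (Fin m) ℝ)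
    (hGcyc : incMat n m esrc edst * G₀ᵀ = 0) (hGrank : G₀.rank = m - n)
    (x₀ : Fin m → ℝ) (hx₀ : ∀ l, x₀ l ≠ 0)
    (Ksc : Finset (Fin m))
    (hKsc : ∀ e, e ∈ Ksc ↔
      ∀ y : Fin m → ℝ, (incMat n m esrc edst).mulVec y = 0 → y e = 0)
    (hmsc : Ksc.card = msc)
    (T : Finset (Fin m)) (hTcard : T.card = n)
    (hTind : LinearIndependent ℝ
      (fun e : {l // l ∈ T} => ((incMat n m esrc edst)ᵀ) e.1)) :
    IsGreatest (achievableRanks m n G₀ x₀ (T \ Ksc)) (m - msc) ∧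
    IsGreatest (achievableRanks m n G₀ x₀ Finset.univ) (m - msc) := by
  classical
  set A := incMat n m esrc edst with hA
  -- basic cardinalities
  have hnm : n ≤ m := by
    have := Finset.card_le_univ T
    simpa [hTcard] using this
  -- rank of A is n
  have hArank : A.rank = n := by
    apply le_antisymm
    · simpa using A.rank_le_card_height
    · rw [Matrix.rank_eq_finrank_span_cols]
      have hle : span ℝ (Set.range fun e : {l // l ∈ T} => Aᵀ e.1) ≤
          span ℝ (Set.range Aᵀ) := by
        apply span_mono
        rintro _ ⟨e, rfl⟩
        exact ⟨e.1, rfl⟩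
      have := Submodule.finrank_mono hle
      rwa [finrank_span_eq_card hTind, Fintype.card_coe, hTcard] at this
  -- kernel of A
  set W : Submodule ℝ (Fin m → ℝ) := LinearMap.ker A.mulVecLin with hW
  have hWrank : n + finrank ℝ W = m := by
    have h := LinearMap.finrank_range_add_finrank_ker A.mulVecLin
    rw [← Matrix.rank, hArank] at h
    simpa [hW, Module.finrank_pi] using h
  -- rows of G₀ lie in W
  have hrow : ∀ j, A.mulVec (G₀ j) = 0 := by
    intro j
    funext i
    have := congrFun (congrFun hGcyc i) j
    simpa [Matrix.mul_apply, Matrix.mulVec, dotProduct] using this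
  -- row space of G₀ equals W
  have hspanG : span ℝ (Set.range G₀) = W := by
    have hle : span ℝ (Set.range G₀) ≤ W := by
      rw [span_le]
      rintro _ ⟨j, rfl⟩
      simpa [hW, LinearMap.mem_ker] using hrow j
    refine Submodule.eq_of_le_of_finrank_le hle ?_
    have : finrank ℝ (span ℝ (Set.range G₀)) = m - n := by
      have h := Matrix.rank_eq_finrank_span_row G₀
      rw [hGrank] at h
      exact h.symm
    rw [this]
    omega
  -- columns of G₀ on Ksc are zero
  have hKcol : ∀ j, ∀ e ∈ Ksc, G₀ j e = 0 := fun j e he => (hKsc e).1 he (G₀ j) (hrow j)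
  -- every non-bridge edge has a nonzero column
  have hKnz : ∀ l ∉ Ksc, ∃ j, G₀ j l ≠ 0 := by
    intro l hl
    by_contra h
    push_neg at h
    apply hl
    rw [hKsc]
    intro y hy
    have hyW : y ∈ span ℝ (Set.range G₀) := by
      rw [hspanG]
      simpa [hW, LinearMap.mem_ker] using hy
    have hle : span ℝ (Set.range G₀) ≤ LinearMap.ker (LinearMap.proj l :
        (Fin m → ℝ) →ₗ[ℝ] ℝ) := by
      rw [span_le]
      rintro _ ⟨j, rfl⟩
      simpa [LinearMap.mem_ker] using h j
    exact hle hyW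
  -- Ksc ⊆ T
  have hKT : Ksc ⊆ T := by
    intro e he
    by_contra heT
    -- the T-columns span the full column space
    have hsub : span ℝ (Set.range fun x : {l // l ∈ T} => Aᵀ x.1) ≤
        span ℝ (Set.range Aᵀ) := by
      apply span_mono; rintro _ ⟨x, rfl⟩; exact ⟨x.1, rfl⟩
    have heq : span ℝ (Set.range fun x : {l // l ∈ T} => Aᵀ x.1) =
        span ℝ (Set.range Aᵀ) := by
      refine Submodule.eq_of_le_of_finrank_le hsub ?_
      rw [finrank_span_eq_card hTind, Fintype.card_coe, hTcard]
      have h := Matrix.rank_eq_finrank_span_cols A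
      rw [hArank] at h
      exact h.symm.le
    have hmem : Aᵀ e ∈ span ℝ (Set.range fun x : {l // l ∈ T} => Aᵀ x.1) := by
      rw [heq]; exact subset_span ⟨e, rfl⟩
    rw [mem_span_range_iff_exists_fun] at hmem
    obtain ⟨c, hc⟩ := hmem
    set y : Fin m → ℝ := fun l => if h : l ∈ T then -(c ⟨l, h⟩) else if l = e then 1 else 0
      with hy
    have hy0 : A.mulVec y = 0 := by
      rw [mulVec_eq_sum_cols]
      have hsplit : ∑ l, y l • Aᵀ l =
          (∑ l ∈ T, y l • Aᵀ l) + ∑ l ∈ Tᶜ, y l • Aᵀ l :=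
        (Finset.sum_add_sum_compl T _).symm
      have hT1 : ∑ l ∈ T, y l • Aᵀ l = -(Aᵀ e) := by
        rw [← Finset.sum_coe_sort T (fun l => y l • Aᵀ l)]
        have : ∀ x : {l // l ∈ T}, y x.1 • Aᵀ x.1 = -(c x • Aᵀ x.1) := by
          intro x
          rw [hy]
          simp [x.2, neg_smul]
        rw [Finset.sum_congr rfl (fun x _ => this x), Finset.sum_neg_distrib, hc]
      have hT2 : ∑ l ∈ Tᶜ, y l • Aᵀ l = Aᵀ e := by
        rw [Finset.sum_eq_single e]
        · simp [hy, heT]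
        · intro l hl hne
          have hlT : l ∉ T := by simpa using hl
          simp [hy, hlT, hne]
        · intro h
          exact absurd (by simpa using heT) (by simpa using h)
      rw [hsplit, hT1, hT2, neg_add_cancel]
    have := (hKsc e).1 he y hy0
    rw [hy] at this
    simp [heT] at this
  have hmscn : msc ≤ n := by
    have := Finset.card_le_card hKT
    omega
  -- the diagonal scaling equivalence
  set d : (Fin m → ℝ) ≃ₗ[ℝ] (Fin m → ℝ) :=
    LinearEquiv.piCongrRight fun l => LinearEquiv.smulOfNeZero ℝ ℝ (x₀ l) (hx₀ l) with hd
  have hdapp : ∀ v l, d v l = x₀ l * v l := by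
    intro v l
    simp [hd, smul_eq_mul]
  -- Upper bound: every achievable rank is at most m - msc
  have hub : ∀ D : Finset (Fin m), ∀ r ∈ achievableRanks m n G₀ x₀ D, r ≤ m - msc := by
    rintro D r ⟨k, x, hx0, hxnz, hxsupp, hrank⟩
    set M : Matrix (Fin (k+1) × Fin (m-n)) (Fin m) ℝ :=
      Matrix.of fun p l => (G₀ * Matrix.diagonal (x p.1)) p.2 l with hM
    rw [← hrank, Matrix.rank_eq_finrank_span_row]
    have hle : span ℝ (Set.range M) ≤ vanishOff Kscᶜ := by
      rw [span_le]
      rintro _ ⟨p, rfl⟩ l hl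
      have hlK : l ∈ Ksc := by simpa using hl
      show M p l = 0
      rw [hM]
      simp [Matrix.mul_diagonal, hKcol p.2 l hlK]
    have := Submodule.finrank_mono hle
    rw [finrank_vanishOff, Finset.card_compl, Fintype.card_fin, hmsc] at this
    exact this
  -- Achievability construction for a perturbation set P ⊆ D disjoint from Ksc
  have hach : ∀ D P : Finset (Fin m), P ⊆ D → (∀ l ∈ P, l ∉ Ksc) →
      m - msc ≤ finrank ℝ
        ↥(W.map (d : (Fin m → ℝ) →ₗ[ℝ] (Fin m → ℝ)) ⊔ vanishOff P) →
      (m - msc) ∈ achievableRanks m n G₀ x₀ D := by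
    intro D P hPD hPK hfr
    set x : Fin (m+1) → Fin m → ℝ :=
      fun i l => if (i : ℕ) = (l : ℕ) + 1 ∧ l ∈ P then 2 * x₀ l else x₀ l with hx
    refine ⟨m, x, ?_, ?_, ?_, ?_⟩
    · funext l
      simp only [hx]
      simp
    · intro i l
      simp only [hx]
      split
      · exact mul_ne_zero two_ne_zero (hx₀ l)
      · exact hx₀ l
    · intro i l hl
      simp only [hx]
      have : l ∉ P := fun h => hl (hPD h)
      simp [this]
    · set M : Matrix (Fin (m+1) × Fin (m-n)) (Fin m) ℝ :=
        Matrix.of fun p l => (G₀ * Matrix.diagonal (x p.1)) p.2 l with hM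
      have hMapp : ∀ p l, M p l = G₀ p.2 l * x p.1 l := by
        intro p l
        rw [hM]
        simp [Matrix.mul_diagonal]
      -- rows at time 0
      have hrow0 : ∀ j, M (0, j) = d (G₀ j) := by
        intro j
        funext l
        rw [hMapp, hdapp]
        simp only [hx]
        simp [mul_comm]
      -- the sup is contained in the row span
      have hsup : W.map (d : (Fin m → ℝ) →ₗ[ℝ] (Fin m → ℝ)) ⊔ vanishOff P ≤
          span ℝ (Set.range M) := by
        refine sup_le ?_ ?_
        · rintro _ ⟨w, hwW, rfl⟩
          have hwG : w ∈ span ℝ (Set.range G₀) := by rw [hspanG]; exact hwW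
          have : (d : (Fin m → ℝ) →ₗ[ℝ] (Fin m → ℝ)) '' Set.range G₀ ⊆
              span ℝ (Set.range M) := by
            rintro _ ⟨_, ⟨j, rfl⟩, rfl⟩
            exact subset_span ⟨(0, j), hrow0 j⟩
          have hmap := Submodule.map_span (d : (Fin m → ℝ) →ₗ[ℝ] (Fin m → ℝ))
            (Set.range G₀)
          have : Submodule.map (d : (Fin m → ℝ) →ₗ[ℝ] (Fin m → ℝ))
              (span ℝ (Set.range G₀)) ≤ span ℝ (Set.range M) := by
            rw [hmap, span_le]
            exact this
          exact this ⟨w, hwG, rfl⟩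
        · rw [vanishOff_eq_span, span_le]
          rintro _ ⟨⟨l, hlP⟩, rfl⟩
          obtain ⟨j, hj⟩ := hKnz l (hPK l hlP)
          have hlm : (l : ℕ) + 1 < m + 1 := by omega
          set i : Fin (m+1) := ⟨(l : ℕ) + 1, hlm⟩ with hi
          have hxi : ∀ l', x i l' = if l' = l then 2 * x₀ l else x₀ l' := by
            intro l'
            simp only [hx]
            by_cases hll : l' = l
            · subst hll
              have hcond : (i : ℕ) = (l' : ℕ) + 1 ∧ l' ∈ P := ⟨by rw [hi], hlP⟩
              rw [if_pos hcond, if_pos rfl]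
            · have hcond : ¬((i : ℕ) = (l' : ℕ) + 1 ∧ l' ∈ P) := by
                rintro ⟨h, -⟩
                apply hll
                apply Fin.ext
                rw [hi] at h
                simp only [Fin.val_mk] at h
                omega
              rw [if_neg hcond, if_neg hll]
          have hx0' : ∀ l', x 0 l' = x₀ l' := by
            intro l'
            simp only [hx]
            simp
          have hdiff : M (i, j) - M (0, j) = (x₀ l * G₀ j l) • (Pi.single l 1 : Fin m → ℝ) := by
            funext l'
            simp only [Pi.sub_apply, Pi.smul_apply, Pi.single_apply, smul_eq_mul]
            rw [hMapp, hMapp, hxi l', hx0' l']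
            by_cases hll : l' = l
            · subst hll
              rw [if_pos rfl, if_pos rfl]
              ring
            · rw [if_neg hll, if_neg hll]
              ring
          have hmem : M (i, j) - M (0, j) ∈ span ℝ (Set.range M) :=
            sub_mem (subset_span ⟨(i, j), rfl⟩) (subset_span ⟨(0, j), rfl⟩)
          rw [hdiff] at hmem
          have hc : (x₀ l * G₀ j l) ≠ 0 := mul_ne_zero (hx₀ l) hj
          have := Submodule.smul_mem (span ℝ (Set.range M)) (x₀ l * G₀ j l)⁻¹ hmem
          rwa [smul_smul, inv_mul_cancel₀ hc, one_smul] at this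
      -- conclude the rank
      rw [Matrix.rank_eq_finrank_span_row]
      show finrank ℝ ↥(span ℝ (Set.range M)) = m - msc
      have hge := hfr.trans (Submodule.finrank_mono hsup)
      have hle : finrank ℝ ↥(span ℝ (Set.range M)) ≤ m - msc := by
        have h1 : span ℝ (Set.range M) ≤ vanishOff Kscᶜ := by
          rw [span_le]
          rintro _ ⟨p, rfl⟩ l hl
          have hlK : l ∈ Ksc := by simpa using hl
          rw [hMapp, hKcol p.2 l hlK, zero_mul]
        have := Submodule.finrank_mono h1
        rwa [finrank_vanishOff, Finset.card_compl, Fintype.card_fin, hmsc] at this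
      omega
  -- finrank of the mapped kernel
  have hfrmap : finrank ℝ ↥(W.map (d : (Fin m → ℝ) →ₗ[ℝ] (Fin m → ℝ))) = m - n := by
    rw [LinearEquiv.finrank_map_eq]
    omega
  -- Case D = univ : vanishOff Kscᶜ alone has dimension m - msc
  have huniv : (m - msc) ∈ achievableRanks m n G₀ x₀ Finset.univ := by
    refine hach Finset.univ Kscᶜ (Finset.subset_univ _) (fun l hl => by simpa using hl) ?_
    have h1 : vanishOff Kscᶜ ≤ W.map (d : (Fin m → ℝ) →ₗ[ℝ] (Fin m → ℝ)) ⊔ vanishOff Kscᶜ :=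
      le_sup_right
    have := Submodule.finrank_mono h1
    rwa [finrank_vanishOff, Finset.card_compl, Fintype.card_fin, hmsc] at this
  -- Case D = T \ Ksc
  have htree : (m - msc) ∈ achievableRanks m n G₀ x₀ (T \ Ksc) := by
    refine hach (T \ Ksc) (T \ Ksc) le_rfl (fun l hl => (Finset.mem_sdiff.1 hl).2) ?_
    -- the sup is a direct sum
    have hinf : W.map (d : (Fin m → ℝ) →ₗ[ℝ] (Fin m → ℝ)) ⊓ vanishOff (T \ Ksc) = ⊥ := by
      rw [eq_bot_iff]
      rintro v ⟨⟨w, hwW, rfl⟩, hv2⟩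
      have hwT : ∀ l ∉ T, w l = 0 := by
        intro l hl
        have hlTK : l ∉ T \ Ksc := fun h => hl (Finset.mem_sdiff.1 h).1
        have h2 := hv2 l hlTK
        simp only [LinearEquiv.coe_coe] at h2
        rw [hdapp] at h2
        exact (mul_eq_zero.1 h2).resolve_left (hx₀ l)
      have hw0 : w = 0 := by
        have hker : A.mulVec w = 0 := hwW
        rw [mulVec_eq_sum_cols] at hker
        have hsplit : ∑ l, w l • Aᵀ l =
            (∑ l ∈ T, w l • Aᵀ l) + ∑ l ∈ Tᶜ, w l • Aᵀ l :=
          (Finset.sum_add_sum_compl T _).symm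
        have hz : ∑ l ∈ Tᶜ, w l • Aᵀ l = 0 :=
          Finset.sum_eq_zero fun l hl => by
            rw [hwT l (by simpa using hl), zero_smul]
        have hTsum : ∑ x : {l // l ∈ T}, w x.1 • Aᵀ x.1 = 0 := by
          rw [Finset.sum_coe_sort T (fun l => w l • Aᵀ l)]
          have := hker
          rw [hsplit, hz, add_zero] at this
          exact this
        have := Fintype.linearIndependent_iff.1 hTind (fun x => w x.1) hTsum
        funext l
        by_cases hl : l ∈ T
        · exact this ⟨l, hl⟩
        · exact hwT l hl
      simp [hw0]
    have hcard : (T \ Ksc).card = n - msc := by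
      rw [Finset.card_sdiff_of_subset hKT, hTcard, hmsc]
    have := Submodule.finrank_sup_add_finrank_inf_eq
      (W.map (d : (Fin m → ℝ) →ₗ[ℝ] (Fin m → ℝ))) (vanishOff (T \ Ksc))
    rw [hinf, hfrmap, finrank_vanishOff, hcard, finrank_bot, add_zero] at this
    omega
  exact ⟨⟨htree, fun r hr => hub _ r hr⟩, ⟨huniv, fun r hr => hub _ r hr⟩⟩
end

section
/- Let G be a connected graph and K'_D ⊆ E(G) a set of edges with devices. Let T_D be a maximal forest (maximal linearly independent set in the graphic matroid) contained in K'_D, of size m_D, and let m_{sc_D} be the number of bridges of G contained in T_D. Then the supremum over all perturbation sequences supported on K'_D of rank(L) equals m − n + m_D − m_{sc_D}. -/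
open Matrix Submodule LinearMap Module

lemma aux_map_ker {R M N : Type*} [Field R] [AddCommGroup M] [Module R M]
    [AddCommGroup N] [Module R N] (f : M →ₗ[R] N) : (ker f).map f = ⊥ := by
  rw [eq_bot_iff]
  rintro x ⟨y, hy, rfl⟩
  simpa using hy

lemma aux_finrank_sup_ker {R M N : Type*} [Field R] [AddCommGroup M] [Module R M]
    [AddCommGroup N] [Module R N] [FiniteDimensional R M]
    (f : M →ₗ[R] N) (W : Submodule R M) :
    finrank R ↥(ker f ⊔ W) = finrank R ↥(ker f) + finrank R ↥(W.map f) := by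
  set U := ker f ⊔ W with hU
  let g : ↥U →ₗ[R] N := f.comp U.subtype
  have h1 : finrank R ↥(range g) + finrank R ↥(ker g) = finrank R ↥U :=
    finrank_range_add_finrank_ker g
  have hker : ker g = comap U.subtype (ker f) := ker_comp _ _
  have h2 : finrank R ↥(ker g) = finrank R ↥(ker f) := by
    rw [hker]
    exact (Submodule.comapSubtypeEquivOfLe le_sup_left).finrank_eq
  have hrange : range g = U.map f := by
    rw [range_comp, Submodule.range_subtype]
  have h3 : U.map f = W.map f := by
    rw [hU, Submodule.map_sup, aux_map_ker, bot_sup_eq]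
  rw [hrange, h3, h2] at h1
  omega

lemma aux_mem_span_singles {ι : Type*} [Fintype ι] [DecidableEq ι]
    (S : Finset ι) (v : ι → ℝ) (h : ∀ l ∉ S, v l = 0) :
    v ∈ span ℝ ((fun l => Pi.single l (1:ℝ)) '' ↑S) := by
  have hv : v = ∑ l ∈ S, v l • (Pi.single l 1 : ι → ℝ) := by
    funext j
    rw [Finset.sum_apply]
    by_cases hj : j ∈ S
    · rw [Finset.sum_eq_single j]
      · simp
      · intro b _ hbj; simp [Pi.single_apply, hbj]
      · intro hjS; exact absurd hj hjS
    · rw [h j hj, Finset.sum_eq_zero]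
      intro b hb
      have : b ≠ j := fun e => hj (e ▸ hb)
      simp [Pi.single_apply, this.symm, Ne.symm this]
  rw [hv]
  exact Submodule.sum_mem _ fun l hl =>
    Submodule.smul_mem _ _ (Submodule.subset_span ⟨l, hl, rfl⟩)

lemma aux_rank_le {ι : Type*} [Fintype ι] {m : ℕ} (M : Matrix ι (Fin m) ℝ)
    (V : Submodule ℝ (Fin m → ℝ)) (h : ∀ i, M i ∈ V) :
    M.rank ≤ finrank ℝ ↥V := by
  rw [Matrix.rank_eq_finrank_span_row]
  exact Submodule.finrank_mono (span_le.2 (Set.range_subset_iff.2 h))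


lemma aux_single_sum {n : ℕ} (v : Fin n → ℝ) (s : Fin (n+1)) :
    ∑ i : Fin n, (if i.succ = s then v i else 0) = Fin.cases 0 v s := by
  induction s using Fin.cases with
  | zero => simp [Fin.succ_ne_zero]
  | succ j =>
    simp only [Fin.succ_inj]
    simp
lemma aux_colsum {n m : ℕ} (esrc edst : Fin m → Fin (n+1)) (hloop : ∀ e, esrc e ≠ edst e)
    (v : Fin n → ℝ) (e : Fin m) :
    ∑ i : Fin n, incMat n m esrc edst i e * v i
      = Fin.cases 0 v (esrc e) - Fin.cases 0 v (edst e) := by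
  rw [← aux_single_sum v (esrc e), ← aux_single_sum v (edst e), ← Finset.sum_sub_distrib]
  refine Finset.sum_congr rfl fun i _ => ?_
  by_cases h1 : i.succ = esrc e
  · have h2 : i.succ ≠ edst e := fun h => hloop e (h1 ▸ h ▸ rfl)
    simp [incMat, h1, h2, hloop e]
  · by_cases h2 : i.succ = edst e
    · simp [incMat, h1, h2, Ne.symm (hloop e)]
    · simp [incMat, h1, h2]

lemma aux_rank_inc {n m : ℕ} (esrc edst : Fin m → Fin (n+1))
    (hloop : ∀ e, esrc e ≠ edst e)
    (hconn : (SimpleGraph.fromRel fun u v => ∃ e, esrc e = u ∧ edst e = v).Connected) :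
    (incMat n m esrc edst).rank = n := by
  set A := incMat n m esrc edst with hA
  have hker : ker (Aᵀ.mulVecLin) = ⊥ := by
    rw [eq_bot_iff]
    intro v hv
    simp only [mem_ker, mulVecLin_apply] at hv
    set φ : Fin (n+1) → ℝ := Fin.cases 0 v with hφ
    have hedge : ∀ e : Fin m, φ (esrc e) = φ (edst e) := by
      intro e
      have : Aᵀ.mulVec v e = 0 := by rw [hv]; rfl
      have h2 : ∑ i : Fin n, A i e * v i = 0 := by
        simpa [Matrix.mulVec, dotProduct, Matrix.transpose_apply, mul_comm] using this
      have := aux_colsum esrc edst hloop v e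
      rw [h2] at this
      exact (sub_eq_zero.1 this.symm)
    have hreach : ∀ u w : Fin (n+1),
        (SimpleGraph.fromRel fun u v => ∃ e, esrc e = u ∧ edst e = v).Reachable u w →
        φ u = φ w := by
      intro u w hr
      obtain ⟨p⟩ := hr
      induction p with
      | nil => rfl
      | cons h p ih =>
        refine Eq.trans ?_ ih
        obtain ⟨hne, h | h⟩ := h
        · obtain ⟨e, he1, he2⟩ := h
          rw [← he1, ← he2]; exact hedge e
        · obtain ⟨e, he1, he2⟩ := h
          rw [← he1, ← he2]; exact (hedge e).symm
    have : ∀ i : Fin n, v i = 0 := by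
      intro i
      have := hreach i.succ 0 (hconn.preconnected i.succ 0)
      simpa [hφ] using this
    exact Submodule.mem_bot ℝ |>.2 (funext this)
  have h1 : Aᵀ.rank = n := by
    have := finrank_range_add_finrank_ker (Aᵀ.mulVecLin)
    rw [hker, finrank_bot] at this
    simpa [Matrix.rank] using this
  rw [← Matrix.rank_transpose]; exact h1

lemma aux_mem_span_image_iff {m : ℕ} {V : Type*} [AddCommGroup V] [Module ℝ V]
    (col : Fin m → V) (s : Finset (Fin m)) (x : V) :
    x ∈ span ℝ (col '' ↑s) ↔ ∃ c : Fin m → ℝ, ∑ l ∈ s, c l • col l = x := by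
  rw [Set.image_eq_range, mem_span_range_iff_exists_fun]
  constructor
  · rintro ⟨c, hc⟩
    refine ⟨fun l => if h : l ∈ s then c ⟨l, h⟩ else 0, ?_⟩
    rw [← hc, Finset.univ_eq_attach, ← Finset.sum_attach s (fun l => (if h : l ∈ s then c ⟨l, h⟩ else 0) • col l)]
    exact Finset.sum_congr rfl fun i _ => by rw [dif_pos i.2]; rfl
  · rintro ⟨c, hc⟩
    refine ⟨fun i => c i.1, ?_⟩
    rw [← hc, Finset.univ_eq_attach]
    exact Finset.sum_attach s (fun l => c l • col l)

lemma aux_span_smul_image {m : ℕ} {V : Type*} [AddCommGroup V] [Module ℝ V]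
    (col : Fin m → V) (c : Fin m → ℝ) (hc : ∀ l, c l ≠ 0) (s : Finset (Fin m)) :
    span ℝ ((fun l => c l • col l) '' ↑s) = span ℝ (col '' ↑s) := by
  apply le_antisymm <;> rw [span_le] <;> rintro _ ⟨l, hl, rfl⟩
  · exact smul_mem _ _ (subset_span ⟨l, hl, rfl⟩)
  · have : col l = (c l)⁻¹ • (c l • col l) := by rw [smul_smul, inv_mul_cancel₀ (hc l), one_smul]
    rw [this]
    exact smul_mem _ _ (subset_span ⟨l, hl, rfl⟩)

def scaleL {m : ℕ} (c : Fin m → ℝ) : (Fin m → ℝ) →ₗ[ℝ] (Fin m → ℝ) where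
  toFun v := fun l => c l * v l
  map_add' u v := by funext l; simp [mul_add]
  map_smul' r v := by funext l; simp [Pi.smul_apply]; ring

lemma scaleL_surj {m : ℕ} (c : Fin m → ℝ) (hc : ∀ l, c l ≠ 0) :
    Function.Surjective (scaleL c) := by
  intro v
  exact ⟨fun l => (c l)⁻¹ * v l, by funext l; simp [scaleL, ← mul_assoc, mul_inv_cancel₀ (hc l)]⟩
lemma aux_sum_subtype {m : ℕ} {V : Type*} [AddCommGroup V] [Module ℝ V]
    (s : Finset (Fin m)) (g : {l // l ∈ s} → ℝ) (v : Fin m → V) :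
    ∑ i : {l // l ∈ s}, g i • v i.1
      = ∑ l ∈ s, (if h : l ∈ s then g ⟨l, h⟩ else 0) • v l := by
  rw [Finset.univ_eq_attach,
    ← Finset.sum_attach s (fun l => (if h : l ∈ s then g ⟨l, h⟩ else 0) • v l)]
  exact Finset.sum_congr rfl fun i _ => by rw [dif_pos i.2]

set_option maxHeartbeats 8000000 in
/-- Corollary 4 (incomplete-deployment supremum): if `T_D` is a maximal forest contained
in the deployment set `K'_D`, of size `m_D`, containing `m_{sc_D}` bridges, then the
supremum of the achievable composite-matrix ranks is `m - n + m_D - m_{sc_D}`. -/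
theorem stmt_13 (n m mD mscD : ℕ) (esrc edst : Fin m → Fin (n+1))
    (hloop : ∀ e, esrc e ≠ edst e)
    (hconn : (SimpleGraph.fromRel fun u v => ∃ e, esrc e = u ∧ edst e = v).Connected)
    (G₀ : Matrix (Fin (m-n)) (Fin m) ℝ)
    (hGcyc : incMat n m esrc edst * G₀ᵀ = 0) (hGrank : G₀.rank = m - n)
    (x₀ : Fin m → ℝ) (hx₀ : ∀ l, x₀ l ≠ 0)
    (KD' TD : Finset (Fin m)) (hsub : TD ⊆ KD')
    (hind : LinearIndependent ℝ
      (fun e : {l // l ∈ TD} => ((incMat n m esrc edst)ᵀ) e.1))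
    (hmax : ∀ e ∈ KD', e ∉ TD → ¬ LinearIndependent ℝ
      (fun l : {l // l ∈ insert e TD} => ((incMat n m esrc edst)ᵀ) l.1))
    (hcard : TD.card = mD)
    (Ksc : Finset (Fin m))
    (hKsc : ∀ e, e ∈ Ksc ↔
      ∀ y : Fin m → ℝ, (incMat n m esrc edst).mulVec y = 0 → y e = 0)
    (hscD : (TD ∩ Ksc).card = mscD) :
    sSup (achievableRanks m n G₀ x₀ KD') = m - n + mD - mscD := by
  set A := incMat n m esrc edst with hAdef
  set f : (Fin m → ℝ) →ₗ[ℝ] (Fin n → ℝ) := A.mulVecLin with hfdef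
  set col : Fin m → (Fin n → ℝ) := fun l => Aᵀ l with hcoldef
  have hind' : LinearIndependent ℝ (fun e : {l // l ∈ TD} => col e.1) := hind
  -- basic rank facts
  have hrankA : A.rank = n := aux_rank_inc esrc edst hloop hconn
  have hfk : n + finrank ℝ ↥(ker f) = m := by
    have h1 := finrank_range_add_finrank_ker f
    rw [show finrank ℝ ↥(range f) = A.rank from rfl, hrankA] at h1
    simpa using h1
  have hnm : n ≤ m := by omega
  have hmulVec_eq_sum : ∀ y : Fin m → ℝ, A.mulVec y = ∑ l, y l • col l := by
    intro y; funext i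
    simp [Matrix.mulVec, dotProduct, hcoldef, Matrix.transpose_apply,
      Finset.sum_apply, mul_comm]
  have hKscmem : ∀ e ∈ Ksc, ∀ y ∈ ker f, y e = 0 := by
    intro e he y hy
    exact (hKsc e).1 he y (by simpa [hfdef] using hy)
  have hKscnot : ∀ e ∉ Ksc, ∃ y ∈ ker f, y e ≠ 0 := by
    intro e he
    have := (hKsc e).not.1 he
    push_neg at this
    obtain ⟨y, hy1, hy2⟩ := this
    exact ⟨y, by simpa [hfdef] using hy1, hy2⟩
  have hrowG : ∀ p, G₀ p ∈ ker f := by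
    intro p
    rw [mem_ker]
    show A.mulVec (G₀ p) = 0
    funext i
    have := congrFun (congrFun hGcyc i) p
    simpa [Matrix.mul_apply, Matrix.mulVec, dotProduct, Matrix.transpose_apply] using this
  have hKspan : span ℝ (Set.range G₀) = ker f := by
    apply eq_of_le_of_finrank_eq (span_le.2 (Set.range_subset_iff.2 hrowG))
    rw [show finrank ℝ ↥(span ℝ (Set.range G₀)) = G₀.rank from (Matrix.rank_eq_finrank_span_row G₀).symm, hGrank]; omega
  -- every deployed column is in the span of forest columns
  have hcol_spanTD : ∀ e ∈ KD', col e ∈ span ℝ (col '' ↑TD) := by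
    intro e he
    by_cases heT : e ∈ TD
    · exact subset_span ⟨e, heT, rfl⟩
    have hni := hmax e he heT
    rw [Fintype.not_linearIndependent_iff] at hni
    obtain ⟨g, hsum, i0, hi0⟩ := hni
    set c : Fin m → ℝ := fun l => if h : l ∈ insert e TD then g ⟨l, h⟩ else 0 with hc
    have hsum' : ∑ l ∈ insert e TD, c l • col l = 0 := by
      rw [← aux_sum_subtype (insert e TD) g col]
      exact hsum
    rw [Finset.sum_insert heT] at hsum'
    have hce : c e ≠ 0 := by
      intro hce0
      rw [hce0, zero_smul, zero_add] at hsum'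
      have hTD0 : ∀ i : {l // l ∈ TD}, c i.1 = 0 := by
        refine Fintype.linearIndependent_iff.1 hind (fun i => c i.1) ?_
        rw [aux_sum_subtype TD (fun i => c i.1) col]
        rw [← hsum']
        exact Finset.sum_congr rfl fun l hl => by rw [dif_pos hl]
      have hg0 : g i0 = 0 := by
        have hmem := i0.2
        rcases Finset.mem_insert.1 hmem with h | h
        · have : c i0.1 = g i0 := by rw [hc]; dsimp only; rw [dif_pos i0.2]
          rw [← this, h, hce0]
        · have : c i0.1 = g i0 := by rw [hc]; dsimp only; rw [dif_pos i0.2]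
          rw [← this]; exact hTD0 ⟨i0.1, h⟩
      exact hi0 hg0
    refine (aux_mem_span_image_iff col TD (col e)).2
      ⟨fun l => -((c e)⁻¹ * c l), ?_⟩
    have : col e = (-(c e)⁻¹) • ∑ l ∈ TD, c l • col l := by
      have h2 : ∑ l ∈ TD, c l • col l = -(c e • col e) := by
        rw [eq_neg_iff_add_eq_zero, add_comm]; exact hsum'
      rw [h2, smul_neg, neg_smul, neg_neg, smul_smul, inv_mul_cancel₀ hce, one_smul]
    rw [this, Finset.smul_sum]
    exact Finset.sum_congr rfl fun l hl => by simp [smul_smul, neg_mul]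
  -- deployed non-bridge columns lie in span of non-bridge forest columns
  have hcol_spanS : ∀ e ∈ KD', e ∉ Ksc → col e ∈ span ℝ (col '' ↑(TD \ Ksc)) := by
    intro e he heK
    by_cases heT : e ∈ TD
    · exact subset_span ⟨e, Finset.mem_sdiff.2 ⟨heT, heK⟩, rfl⟩
    obtain ⟨c, hc⟩ := (aux_mem_span_image_iff col TD (col e)).1 (hcol_spanTD e he)
    set y : Fin m → ℝ := fun l => if l = e then -1 else if l ∈ TD then c l else 0 with hy
    have hAy : A.mulVec y = 0 := by
      rw [hmulVec_eq_sum]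
      rw [← Finset.sum_subset (Finset.subset_univ (insert e TD))
        (fun l _ hl => ?_)]
      · rw [Finset.sum_insert heT]
        have h1 : y e • col e = -(col e) := by
          rw [hy]; dsimp only; rw [if_pos rfl, neg_one_smul]
        have h2 : ∑ l ∈ TD, y l • col l = ∑ l ∈ TD, c l • col l := by
          refine Finset.sum_congr rfl fun l hl => ?_
          have hle : l ≠ e := fun h => heT (h ▸ hl)
          rw [hy]; dsimp only; rw [if_neg hle, if_pos hl]
        rw [h1, h2, hc, neg_add_cancel]
      · have hle : l ≠ e := fun h => hl (h ▸ Finset.mem_insert_self e TD)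
        have hlT : l ∉ TD := fun h => hl (Finset.mem_insert_of_mem h)
        rw [hy]; dsimp only; rw [if_neg hle, if_neg hlT, zero_smul]
    have hcf : ∀ l ∈ TD, l ∈ Ksc → c l = 0 := by
      intro l hl hlK
      have h0 := (hKsc l).1 hlK y hAy
      have hle : l ≠ e := fun h => heK (h ▸ hlK)
      rw [hy] at h0; dsimp only at h0; rw [if_neg hle, if_pos hl] at h0
      exact h0
    refine (aux_mem_span_image_iff col (TD \ Ksc) (col e)).2 ⟨c, ?_⟩
    rw [Finset.sum_subset Finset.sdiff_subset (fun l hl hl2 => ?_)]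
    · exact hc
    · have hlK : l ∈ Ksc := by
        by_contra hk
        exact hl2 (Finset.mem_sdiff.2 ⟨hl, hk⟩)
      rw [hcf l hl hlK, zero_smul]
  -- rank of the span of non-bridge forest columns
  have hmscD_le : mscD ≤ mD := by
    rw [← hcard, ← hscD]
    exact Finset.card_le_card Finset.inter_subset_left
  have hcards : (TD \ Ksc).card = mD - mscD := by
    have := Finset.card_sdiff_add_card_inter TD Ksc
    omega
  have hindS : LinearIndependent ℝ (fun e : {l // l ∈ TD \ Ksc} => col e.1) := by
    have hinj : Function.Injective
        (fun e : {l // l ∈ TD \ Ksc} => (⟨e.1, (Finset.mem_sdiff.1 e.2).1⟩ : {l // l ∈ TD})) := by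
      intro a b hab
      exact Subtype.ext (Subtype.mk_eq_mk.1 hab)
    exact hind'.comp _ hinj
  have hfrS : finrank ℝ ↥(span ℝ (col '' ↑(TD \ Ksc))) = mD - mscD := by
    have himg : col '' ↑(TD \ Ksc) = Set.range (fun e : {l // l ∈ TD \ Ksc} => col e.1) := by
      ext v
      constructor
      · rintro ⟨l, hl, rfl⟩; exact ⟨⟨l, hl⟩, rfl⟩
      · rintro ⟨⟨l, hl⟩, rfl⟩; exact ⟨l, hl, rfl⟩
    rw [himg, finrank_span_eq_card hindS, Fintype.card_coe]
    exact hcards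
  have hspan_eq : span ℝ (col '' ↑(KD' \ Ksc)) = span ℝ (col '' ↑(TD \ Ksc)) := by
    apply le_antisymm
    · rw [span_le]
      rintro _ ⟨e, he, rfl⟩
      rw [Finset.coe_sdiff] at he
      exact hcol_spanS e he.1 he.2
    · apply span_mono
      apply Set.image_mono
      intro l hl
      rw [Finset.coe_sdiff] at hl ⊢
      exact ⟨hsub hl.1, hl.2⟩

  -- scaled kernel map
  set fB : (Fin m → ℝ) →ₗ[ℝ] (Fin n → ℝ) := f.comp (scaleL (fun l => (x₀ l)⁻¹)) with hfBdef
  have hrangeB : range fB = range f := by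
    rw [hfBdef, range_comp,
      range_eq_top.2 (scaleL_surj _ (fun l => inv_ne_zero (hx₀ l))), Submodule.map_top]
  have hkerB_dim : finrank ℝ ↥(ker fB) = m - n := by
    have h1 := finrank_range_add_finrank_ker fB
    rw [hrangeB] at h1
    have h2 : finrank ℝ ↥(range f) = n := by
      rw [show finrank ℝ ↥(range f) = A.rank from rfl, hrankA]
    have h3 : finrank ℝ (Fin m → ℝ) = m := Module.finrank_fin_fun ℝ
    omega
  have hrow0 : ∀ p, (fun l => G₀ p l * x₀ l) ∈ ker fB := by
    intro p
    have hv : scaleL (fun l => (x₀ l)⁻¹) (fun l => G₀ p l * x₀ l) = G₀ p := by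
      funext l
      show (x₀ l)⁻¹ * (G₀ p l * x₀ l) = G₀ p l
      rw [mul_comm (G₀ p l), ← mul_assoc, inv_mul_cancel₀ (hx₀ l), one_mul]
    rw [mem_ker, hfBdef, LinearMap.comp_apply, hv]
    exact hrowG p
  have hdiagrank : (G₀ * diagonal x₀).rank = m - n := by
    rw [Matrix.rank_mul_eq_left_of_isUnit_det _ _ ?_, hGrank]
    rw [Matrix.det_diagonal, isUnit_iff_ne_zero]
    exact Finset.prod_ne_zero_iff.2 fun l _ => hx₀ l
  have hrowsp0 : span ℝ (Set.range (G₀ * diagonal x₀)) = ker fB := by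
    apply eq_of_le_of_finrank_eq
    · rw [span_le]; refine Set.range_subset_iff.2 ?_
      intro p
      have h3 : (G₀ * diagonal x₀) p = fun l => G₀ p l * x₀ l := by
        funext l; exact Matrix.mul_diagonal x₀ G₀ p l
      rw [h3]; exact hrow0 p
    · rw [show finrank ℝ ↥(span ℝ (Set.range (G₀ * diagonal x₀))) = (G₀ * diagonal x₀).rank from (Matrix.rank_eq_finrank_span_row _).symm, hdiagrank, hkerB_dim]
  have hsingle : ∀ l, fB (Pi.single l 1) = (x₀ l)⁻¹ • col l := by
    intro l
    have h1 : scaleL (fun l => (x₀ l)⁻¹) (Pi.single l 1) = Pi.single l ((x₀ l)⁻¹) := by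
      funext l'
      rcases eq_or_ne l' l with h | h
      · subst h; simp [scaleL]
      · simp [scaleL, Pi.single_eq_of_ne h]
    rw [hfBdef, LinearMap.comp_apply, h1]
    show A.mulVec (Pi.single l ((x₀ l)⁻¹)) = _
    rw [Matrix.mulVec_single]
    funext i
    show A i l * (x₀ l)⁻¹ = (x₀ l)⁻¹ * col l i
    rw [mul_comm]; rfl
  have hmapB : ∀ s : Finset (Fin m),
      Submodule.map fB (span ℝ ((fun l => Pi.single l (1:ℝ)) '' ↑s)) = span ℝ (col '' ↑s) := by
    intro s
    rw [Submodule.map_span]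
    have himg : ⇑fB '' ((fun l => Pi.single l (1:ℝ)) '' ↑s)
        = (fun l => (x₀ l)⁻¹ • col l) '' ↑s := by
      ext v
      constructor
      · rintro ⟨_, ⟨l, hl, rfl⟩, rfl⟩; exact ⟨l, hl, (hsingle l).symm⟩
      · rintro ⟨l, hl, rfl⟩; exact ⟨Pi.single l 1, ⟨l, hl, rfl⟩, hsingle l⟩
    rw [himg]
    exact aux_span_smul_image col (fun l => (x₀ l)⁻¹) (fun l => inv_ne_zero (hx₀ l)) s
  have hdim : ∀ s : Finset (Fin m),
      finrank ℝ ↥(ker fB ⊔ span ℝ ((fun l => Pi.single l (1:ℝ)) '' ↑s))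
        = (m - n) + finrank ℝ ↥(span ℝ (col '' ↑s)) := by
    intro s
    rw [aux_finrank_sup_ker fB _, hkerB_dim, hmapB s]
  -- upper bound
  have hub : ∀ r ∈ achievableRanks m n G₀ x₀ KD', r ≤ m - n + mD - mscD := by
    rintro r ⟨k, x, hx0, hxne, hxout, hrank⟩
    rw [← hrank]
    refine le_trans (aux_rank_le _
      (ker fB ⊔ span ℝ ((fun l => Pi.single l (1:ℝ)) '' ↑(KD' \ Ksc))) ?_) ?_
    · rintro ⟨i, p⟩
      have hrow : (Matrix.of fun (q : Fin (k+1) × Fin (m-n)) (l : Fin m) =>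
          (G₀ * Matrix.diagonal (x q.1)) q.2 l) (i, p) =
          (fun l => G₀ p l * x₀ l) + (fun l => G₀ p l * (x i l - x₀ l)) := by
        funext l
        show (G₀ * diagonal (x i)) p l = _
        rw [Matrix.mul_diagonal]
        show G₀ p l * x i l = G₀ p l * x₀ l + G₀ p l * (x i l - x₀ l)
        ring
      rw [hrow]
      refine Submodule.add_mem _ (Submodule.mem_sup_left (hrow0 p))
        (Submodule.mem_sup_right ?_)
      apply aux_mem_span_singles
      intro l hl
      by_cases hlK : l ∈ KD'
      · have hlsc : l ∈ Ksc := by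
          by_contra h2; exact hl (Finset.mem_sdiff.2 ⟨hlK, h2⟩)
        show G₀ p l * (x i l - x₀ l) = 0
        rw [hKscmem l hlsc (G₀ p) (hrowG p), zero_mul]
      · show G₀ p l * (x i l - x₀ l) = 0
        rw [hxout i l hlK, sub_self, mul_zero]
    · rw [hdim, hspan_eq, hfrS]
      omega

  -- lower bound: explicit achieving sequence
  have hmem : (m - n) + (mD - mscD) ∈ achievableRanks m n G₀ x₀ KD' := by
    set s : Finset (Fin m) := TD \ Ksc with hs
    set k : ℕ := s.card with hk
    set σ : Fin k → {l // l ∈ s} := fun j => s.equivFin.symm j with hσ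
    set lf : Fin k → Fin m := fun j => (σ j).1 with hlf
    have hlmem : ∀ j, lf j ∈ s := fun j => (σ j).2
    have hlKD : ∀ j, lf j ∈ KD' := fun j => hsub (Finset.mem_sdiff.1 (hlmem j)).1
    set x : Fin (k+1) → Fin m → ℝ :=
      Fin.cases x₀ (fun j => Function.update x₀ (lf j) (2 * x₀ (lf j))) with hx
    have hx0 : x 0 = x₀ := by simp [hx]
    have hxsucc : ∀ j, x j.succ = Function.update x₀ (lf j) (2 * x₀ (lf j)) := by
      intro j; simp [hx]
    refine ⟨k, x, hx0, ?_, ?_, ?_⟩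
    · intro i l
      induction i using Fin.cases with
      | zero => rw [hx0]; exact hx₀ l
      | succ j =>
        rw [hxsucc j]
        rcases eq_or_ne l (lf j) with h | h
        · subst h; rw [Function.update_self]; exact mul_ne_zero two_ne_zero (hx₀ _)
        · rw [Function.update_of_ne h]; exact hx₀ l
    · intro i l hl
      induction i using Fin.cases with
      | zero => rw [hx0]
      | succ j =>
        have hne : l ≠ lf j := fun h => hl (h ▸ hlKD j)
        rw [hxsucc j, Function.update_of_ne hne]
    · -- rank computation
      set L : Matrix (Fin (k+1) × Fin (m-n)) (Fin m) ℝ :=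
        Matrix.of (fun (p : Fin (k+1) × Fin (m-n)) (l : Fin m) =>
          (G₀ * Matrix.diagonal (x p.1)) p.2 l) with hL
      have hLapp : ∀ i p l, L (i, p) l = G₀ p l * x i l := by
        intro i p l
        show (G₀ * diagonal (x i)) p l = _
        exact Matrix.mul_diagonal _ _ _ _
      have hL0 : ∀ p, L (0, p) = fun l => G₀ p l * x₀ l := by
        intro p; funext l; rw [hLapp, hx0]
      have hdiff : ∀ (j : Fin k) (p : Fin (m-n)), (L (j.succ, p)) - (L (0, p))
          = Pi.single (lf j) (G₀ p (lf j) * x₀ (lf j)) := by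
        intro j p; funext l
        rcases eq_or_ne l (lf j) with h | h
        · subst h
          show L (j.succ, p) (lf j) - L (0, p) (lf j) = _
          rw [hLapp, hLapp, hx0, hxsucc, Function.update_self, Pi.single_eq_same]
          ring
        · show L (j.succ, p) l - L (0, p) l = _
          rw [hLapp, hLapp, hx0, hxsucc, Function.update_of_ne h, Pi.single_eq_of_ne h, sub_self]
      have hspanrows : span ℝ (Set.range L)
          = ker fB ⊔ span ℝ ((fun l => Pi.single l (1:ℝ)) '' ↑s) := by
        apply le_antisymm
        · rw [span_le]; refine Set.range_subset_iff.2 ?_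
          rintro ⟨i, p⟩
          induction i using Fin.cases with
          | zero =>
            apply Submodule.mem_sup_left
            rw [hL0 p]; exact hrow0 p
          | succ j =>
            have hLs : L (j.succ, p) = L (0, p) + (L (j.succ, p) - L (0, p)) := by abel
            rw [hLs, hdiff j p]
            refine Submodule.add_mem _
              (Submodule.mem_sup_left (by rw [hL0 p]; exact hrow0 p))
              (Submodule.mem_sup_right ?_)
            apply aux_mem_span_singles
            intro l hl
            exact Pi.single_eq_of_ne (fun h => hl (by rw [h]; exact hlmem j)) _
        · apply sup_le
          · rw [← hrowsp0, span_le]; refine Set.range_subset_iff.2 ?_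
            intro p
            apply subset_span
            refine ⟨(0, p), ?_⟩
            rw [hL0 p]
            funext l
            exact (Matrix.mul_diagonal _ _ _ _).symm
          · rw [span_le]
            rintro _ ⟨l0, hl0, rfl⟩
            show Pi.single (M := fun _ : Fin m => ℝ) l0 1 ∈ span ℝ (Set.range L)
            have hl0' : l0 ∈ s := hl0
            obtain ⟨y, hyker, hy0⟩ := hKscnot l0 (Finset.mem_sdiff.1 hl0').2
            rw [← hKspan] at hyker
            obtain ⟨c, hc⟩ := (mem_span_range_iff_exists_fun ℝ).1 hyker
            set j : Fin k := s.equivFin ⟨l0, hl0'⟩ with hj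
            have hlj : lf j = l0 := by simp [hlf, hσ, hj]
            have hz : Pi.single (M := fun _ : Fin m => ℝ) l0 (y l0 * x₀ l0)
                = ∑ p, c p • (L (j.succ, p) - L (0, p)) := by
              funext l
              rw [Finset.sum_apply]
              rcases eq_or_ne l l0 with h | h
              · subst h
                have hterm : ∀ p, (c p • (L (j.succ, p) - L (0, p))) l
                    = c p * (G₀ p l * x₀ l) := by
                  intro p
                  rw [Pi.smul_apply, hdiff j p, hlj, Pi.single_eq_same, smul_eq_mul]
                rw [Finset.sum_congr rfl (fun p _ => hterm p), Pi.single_eq_same]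
                have hy : y l = ∑ p, c p * G₀ p l := by
                  rw [← hc, Finset.sum_apply]
                  exact Finset.sum_congr rfl fun p _ => rfl
                rw [hy, Finset.sum_mul]
                exact Finset.sum_congr rfl fun p _ => by ring
              · rw [Pi.single_eq_of_ne h]
                refine (Finset.sum_eq_zero fun p _ => ?_).symm
                rw [Pi.smul_apply, hdiff j p, hlj, Pi.single_eq_of_ne h, smul_zero]
            have hzmem : Pi.single (M := fun _ : Fin m => ℝ) l0 (y l0 * x₀ l0) ∈ span ℝ (Set.range L) := by
              rw [hz]
              refine Submodule.sum_mem _ fun p _ => ?_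
              exact Submodule.smul_mem _ _ (Submodule.sub_mem _
                (subset_span ⟨(j.succ, p), rfl⟩) (subset_span ⟨(0, p), rfl⟩))
            have hsc : y l0 * x₀ l0 ≠ 0 := mul_ne_zero hy0 (hx₀ l0)
            have hone : Pi.single (M := fun _ : Fin m => ℝ) l0 (1:ℝ)
                = (y l0 * x₀ l0)⁻¹ • Pi.single (M := fun _ : Fin m => ℝ) l0 (y l0 * x₀ l0) := by
              funext l
              rcases eq_or_ne l l0 with h | h
              · subst h
                rw [Pi.smul_apply, Pi.single_eq_same, Pi.single_eq_same, smul_eq_mul,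
                  inv_mul_cancel₀ hsc]
              · rw [Pi.smul_apply, Pi.single_eq_of_ne h, Pi.single_eq_of_ne h, smul_zero]
            rw [hone]
            exact Submodule.smul_mem _ _ hzmem
      show L.rank = (m - n) + (mD - mscD)
      rw [show L.rank = finrank ℝ ↥(span ℝ (Set.range L)) from Matrix.rank_eq_finrank_span_row L, hspanrows, hdim s, hfrS]
  -- conclusion
  have hNmem : m - n + mD - mscD ∈ achievableRanks m n G₀ x₀ KD' := by
    have harith : m - n + mD - mscD = (m - n) + (mD - mscD) := by omega
    rw [harith]; exact hmem
  apply le_antisymm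
  · exact csSup_le ⟨_, hNmem⟩ hub
  · exact le_csSup ⟨m - n + mD - mscD, hub⟩ hNmem
end
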